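/- Let K be a field of characteristic zero, a, b ∈ K with a² - b² = 1 (so a - b ≠ 0), and cⱼ ∈ K. The endomorphism f of A₁(K) given by f(x) = ax + by + Σⱼ cⱼ(x-y)^{2j}, f(y) = ay + bx + Σⱼ cⱼ(x-y)^{2j} is an automorphism, with inverse given by f⁻¹(x) = ax - by + (b-a)·Σⱼ cⱼ((x-y)/(a-b))^{2j} and f⁻¹(y) = ay - bx + (b-a)·Σⱼ cⱼ((x-y)/(a-b))^{2j}. -/

import Mathlib

open scoped BigOperators

variable (K : Type*) [Field K]

/-- Defining relation of the first Weyl algebra: `y*x = x*y + 1`. -/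
inductive WeylRel : FreeAlgebra K (Fin 2) → FreeAlgebra K (Fin 2) → Prop
  | rel : WeylRel (FreeAlgebra.ι K 1 * FreeAlgebra.ι K 0) (FreeAlgebra.ι K 0 * FreeAlgebra.ι K 1 + 1)

/-- The first Weyl algebra `A₁(K) = K⟨x,y⟩/(yx - xy - 1)`. -/
abbrev Weyl := RingQuot (WeylRel K)

/-- The generator `x` of `A₁(K)`. -/
abbrev wx : Weyl K := RingQuot.mkAlgHom K (WeylRel K) (FreeAlgebra.ι K 0)

/-- The generator `y` of `A₁(K)`. -/
abbrev wy : Weyl K := RingQuot.mkAlgHom K (WeylRel K) (FreeAlgebra.ι K 1)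

/-!
Write `d = x - y`. The map `f` is `x ↦ a x + b y + P(d)`, `y ↦ a y + b x + P(d)` for a polynomial `P`:
a hyperbolic rotation followed by a shift. The rotation preserves `yx = xy + 1` because
`a² - b² = 1`, and the shift preserves it because `P(d)` commutes with the difference `(a - b) d` of
the two rotated generators. Every such map sends `d` to `(a - b) d`, so the map of the same shape with
parameters `a, -b, (b - a) P((a + b) X)` inverts `f`, as one checks on the generators using
`(a + b)(a - b) = 1`.
-/

open Polynomial

theorem add_mul_add_eq_of_commute_sub {R : Type*} [Ring R] {p q s : R} (h : q * p = p * q + 1)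
    (hs : Commute s (p - q)) : (q + s) * (p + s) = (p + s) * (q + s) + 1 := by
  have hsp : s * p = (p - q) * s + s * q := by rw [← hs.eq]; noncomm_ring
  calc (q + s) * (p + s) = q * p + q * s + s * p + s * s := by noncomm_ring
    _ = (p + s) * (q + s) + 1 := by rw [h, hsp]; noncomm_ring

theorem boost_mul_boost_eq {R A : Type*} [CommRing R] [Ring A] [Algebra R A] {a b : R}
    (hab : a ^ 2 - b ^ 2 = 1) {p q : A} (h : q * p = p * q + 1) :
    (a • q + b • p) * (a • p + b • q) = (a • p + b • q) * (a • q + b • p) + 1 := by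
  simp only [add_mul, mul_add, smul_mul_smul, h, smul_add]
  match_scalars <;> first | ring1 | linear_combination hab

theorem commute_aeval_self {R A : Type*} [CommSemiring R] [Semiring A] [Algebra R A]
    (x : A) (P : R[X]) : Commute (aeval x P) x := by
  simpa using (Commute.all P X).map (aeval x)

theorem aeval_C_mul_comp_C_mul_X {R A : Type*} [CommSemiring R] [Semiring A] [Algebra R A]
    (x : A) (P : R[X]) (r t : R) : aeval x (C r * P.comp (C t * X)) = r • aeval (t • x) P := by
  simp [aeval_comp, Algebra.smul_def]

namespace Weyl

variable {K}

theorem wy_mul_wx : wy K * wx K = wx K * wy K + 1 := by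
  simpa only [map_mul, map_add, map_one] using RingQuot.mkAlgHom_rel K (WeylRel.rel (K := K))

section Lift

variable {A : Type*} [Ring A] [Algebra K A]

def lift (p q : A) (h : q * p = p * q + 1) : Weyl K →ₐ[K] A :=
  RingQuot.liftAlgHom K ⟨FreeAlgebra.lift K ![p, q], by
    rintro _ _ ⟨⟩
    simpa only [map_mul, map_add, map_one, FreeAlgebra.lift_ι_apply, Matrix.cons_val_zero,
      Matrix.cons_val_one] using h⟩

@[simp]
theorem lift_wx (p q : A) (h : q * p = p * q + 1) : lift p q h (wx K) = p := by
  simp [lift]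

@[simp]
theorem lift_wy (p q : A) (h : q * p = p * q + 1) : lift p q h (wy K) = q := by
  simp [lift]

theorem algHom_ext {φ ψ : Weyl K →ₐ[K] A} (hx : φ (wx K) = ψ (wx K)) (hy : φ (wy K) = ψ (wy K)) :
    φ = ψ := by
  refine RingQuot.ringQuot_ext' _ _ _ (FreeAlgebra.hom_ext (funext fun i => ?_))
  fin_cases i
  exacts [hx, hy]

end Lift

section BoostShift

variable {a b : K} (hab : a ^ 2 - b ^ 2 = 1) (P : K[X])

noncomputable def boostShift : Weyl K →ₐ[K] Weyl K :=
  lift (a • wx K + b • wy K + aeval (wx K - wy K) P) (a • wy K + b • wx K + aeval (wx K - wy K) P)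
    (add_mul_add_eq_of_commute_sub (boost_mul_boost_eq hab wy_mul_wx) <| by
      rw [show a • wx K + b • wy K - (a • wy K + b • wx K) = (a - b) • (wx K - wy K) by module]
      exact (commute_aeval_self _ P).smul_right _)

@[simp]
theorem boostShift_wx : boostShift hab P (wx K) = a • wx K + b • wy K + aeval (wx K - wy K) P :=
  lift_wx ..

@[simp]
theorem boostShift_wy : boostShift hab P (wy K) = a • wy K + b • wx K + aeval (wx K - wy K) P :=
  lift_wy ..

theorem boostShift_wx_sub_wy : boostShift hab P (wx K - wy K) = (a - b) • (wx K - wy K) := by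
  rw [map_sub, boostShift_wx, boostShift_wy]
  module

theorem boostShift_aeval_smul (t : K) (Q : K[X]) :
    boostShift hab P (aeval (t • (wx K - wy K)) Q) = aeval ((t * (a - b)) • (wx K - wy K)) Q := by
  rw [← aeval_algHom_apply, map_smul, boostShift_wx_sub_wy, smul_smul]

noncomputable def boostShiftInv : Weyl K →ₐ[K] Weyl K :=
  boostShift (a := a) (b := -b) (by rwa [neg_sq]) (C (b - a) * P.comp (C (a + b) * X))

theorem boostShiftInv_wx : boostShiftInv hab P (wx K) =
    a • wx K - b • wy K + (b - a) • aeval ((a + b) • (wx K - wy K)) P := by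
  rw [boostShiftInv, boostShift_wx, aeval_C_mul_comp_C_mul_X]
  module

theorem boostShiftInv_wy : boostShiftInv hab P (wy K) =
    a • wy K - b • wx K + (b - a) • aeval ((a + b) • (wx K - wy K)) P := by
  rw [boostShiftInv, boostShift_wy, aeval_C_mul_comp_C_mul_X]
  module

theorem boostShiftInv_aeval (Q : K[X]) :
    boostShiftInv hab P (aeval (wx K - wy K) Q) = aeval ((a + b) • (wx K - wy K)) Q := by
  rw [boostShiftInv, ← aeval_algHom_apply, boostShift_wx_sub_wy, sub_neg_eq_add]

theorem boostShiftInv_comp_boostShift :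
    (boostShiftInv hab P).comp (boostShift hab P) = AlgHom.id K (Weyl K) := by
  apply algHom_ext
  all_goals
    simp only [AlgHom.comp_apply, boostShift_wx, boostShift_wy, map_add, map_smul,
      boostShiftInv_wx, boostShiftInv_wy, boostShiftInv_aeval, AlgHom.id_apply]
    match_scalars <;> first | ring1 | linear_combination hab | linear_combination -hab

theorem boostShift_comp_boostShiftInv :
    (boostShift hab P).comp (boostShiftInv hab P) = AlgHom.id K (Weyl K) := by
  have hmul : (a + b) * (a - b) = 1 := by linear_combination hab
  apply algHom_ext
  all_goals
    simp only [AlgHom.comp_apply, boostShiftInv_wx, boostShiftInv_wy, map_add, map_sub, map_smul,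
      boostShift_wx, boostShift_wy, boostShift_aeval_smul, hmul, one_smul, AlgHom.id_apply]
    match_scalars <;> first | ring1 | linear_combination hab

end BoostShift

end Weyl

theorem stmt_4 (n : ℕ) (a b : K) (c : ℕ → K) (hab : a ^ 2 - b ^ 2 = 1)
    (f : Weyl K →ₐ[K] Weyl K)
    (hfx : f (wx K) = a • wx K + b • wy K + ∑ j ∈ Finset.range (n + 1), c j • (wx K - wy K) ^ (2 * j))
    (hfy : f (wy K) = a • wy K + b • wx K + ∑ j ∈ Finset.range (n + 1), c j • (wx K - wy K) ^ (2 * j)) :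
    ∃ g : Weyl K →ₐ[K] Weyl K,
      (∀ u, g (f u) = u) ∧ (∀ u, f (g u) = u) ∧
      g (wx K) = a • wx K - b • wy K +
        (b - a) • ∑ j ∈ Finset.range (n + 1), c j • ((a - b)⁻¹ • (wx K - wy K)) ^ (2 * j) ∧
      g (wy K) = a • wy K - b • wx K +
        (b - a) • ∑ j ∈ Finset.range (n + 1), c j • ((a - b)⁻¹ • (wx K - wy K)) ^ (2 * j) := by
  set P : K[X] := ∑ j ∈ Finset.range (n + 1), C (c j) * X ^ (2 * j)
  have hP (t : Weyl K) : aeval t P = ∑ j ∈ Finset.range (n + 1), c j • t ^ (2 * j) := by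
    simp [P, Algebra.smul_def]
  obtain rfl : f = Weyl.boostShift hab P := Weyl.algHom_ext
    (by rw [hfx, Weyl.boostShift_wx, hP]) (by rw [hfy, Weyl.boostShift_wy, hP])
  have hinv : (a - b)⁻¹ = a + b := inv_eq_of_mul_eq_one_right (by linear_combination hab)
  refine ⟨Weyl.boostShiftInv hab P, DFunLike.congr_fun (Weyl.boostShiftInv_comp_boostShift hab P),
    DFunLike.congr_fun (Weyl.boostShift_comp_boostShiftInv hab P), ?_, ?_⟩
  · rw [Weyl.boostShiftInv_wx, hinv, hP]
  · rw [Weyl.boostShiftInv_wy, hinv, hP]
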